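/- Let h be a complete dg Lie algebra over a ℚ-algebra, let n ≥ 1 be an integer, and let φ ∈ MC(h) be a Maurer–Cartan element with φ ∈ F^n h. Consider the homology class θ_n := [π_{n+1}(φ)] ∈ H_{-1}(h/F^{n+1} h), where π_{n+1} : h → h/F^{n+1} h is the canonical projection. Then θ_n = 0 if and only if there exists υ ∈ h_0 such that υ·φ ∈ F^{n+1} h. -/

import Mathlib

/-!
Framework: complete (ℤ-graded) differential graded Lie algebras over a commutative
ring, Maurer--Cartan elements, the gauge action (defined by its exponential series,
using the completeness of the filtration), gauge triviality sequences and the gauge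
equivalence degree, following the paper.
-/

open scoped BigOperators

noncomputable section

namespace PaperGauge

variable {R : Type*} [CommRing R]

/-- The limit of a sequence with respect to a complete descending filtration:
the (unique, by separatedness) element `y` with `y - x n ∈ F (n+1)` for all `n`,
when such an element exists. -/
noncomputable def limOfF {N : Type*} [AddCommGroup N] [Module R N]
    (F : ℕ → Submodule R N) (x : ℕ → N) : N := by
  classical exact if h : ∃ y : N, ∀ n, y - x n ∈ F (n + 1) then h.choose else 0

/-- The gauge action series
`λ · φ = e^{ad_λ}(φ) - ((e^{ad_λ} - id)/ad_λ)(D λ)`,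
defined as the limit (w.r.t. the complete filtration `F`) of its partial sums;
`ad` is the adjoint action `ad lam y = [lam, y]` and `D` is the differential. -/
noncomputable def gaugeSeries {N : Type*} [AddCommGroup N] [Module R N] [Algebra ℚ R]
    (F : ℕ → Submodule R N) (ad : N → N → N) (D : N → N) (lam φ : N) : N :=
  limOfF F (fun M =>
    (∑ k ∈ Finset.range (M + 1),
        algebraMap ℚ R ((Nat.factorial k : ℚ))⁻¹ • ((ad lam)^[k] φ)) -
      ∑ k ∈ Finset.range (M + 1),
        algebraMap ℚ R ((Nat.factorial (k + 1) : ℚ))⁻¹ • ((ad lam)^[k] (D lam)))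

/-- Vanishing of the obstruction class
`θ_k = [π_{k+1} x] ∈ H_{-1}(h / F^{k+1} h)` (for `x ∈ F^k` of homological degree `-1`
which is a cycle in the quotient): the class is zero precisely when `x` is, modulo
`F^{k+1}`, the boundary `D υ` of a degree-`0` element `υ`. Here `gr0` is the degree-`0`
part and `D` is the (possibly twisted) differential. -/
def ObstructionZeroG {N : Type*} [AddCommGroup N] [Module R N] (F : ℕ → Submodule R N)
    (gr0 : Submodule R N) (D : N → N) (k : ℕ) (x : N) : Prop :=
  ∃ υ ∈ gr0, x - D υ ∈ F (k + 1)

/-- `φ` admits a gauge triviality sequence `(θ_k)_{1 ≤ k ≤ n}` (Construction 1.9):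
a sequence of Maurer--Cartan elements `Φ k` and gauges `υ k` with `Φ 1 = φ`, where as
long as `k < n` the obstruction class `θ_k = [π_{k+1}(Φ k)]` vanishes and the chosen
gauge pushes `Φ k` into `F^{k+1}`, and (if `n` is finite) the final class `θ_n` is
nonzero. The differential `D` may be a twisted one. -/
def HasGTSeqG {N : Type*} [AddCommGroup N] [Module R N] [Algebra ℚ R]
    (F : ℕ → Submodule R N) (gr0 : Submodule R N) (ad : N → N → N) (D : N → N)
    (φ : N) (n : ℕ∞) : Prop :=
  ∃ (Φ : ℕ → N) (υ : ℕ → N), Φ 1 = φ ∧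
    (∀ k : ℕ, 1 ≤ k → (k : ℕ∞) < n →
      ObstructionZeroG F gr0 D k (Φ k) ∧ υ k ∈ gr0 ∧
        Φ (k + 1) = gaugeSeries F ad D (υ k) (Φ k) ∧ Φ (k + 1) ∈ F (k + 1)) ∧
    (∀ k : ℕ, 1 ≤ k → (k : ℕ∞) = n → ¬ ObstructionZeroG F gr0 D k (Φ k))

/-- A `δ`-weight grading (Definition 1.16) on a filtered dg module, encoded by its
family of weight projections `p k` (`k ≥ 1`): the projections are orthogonal
idempotents, the filtration is `F^n = ∏_{k ≥ n} (weight k part)`, the projections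
preserve the homological grading, the bracket adds weights, and the differential
decomposes as `d = d_0 + d_δ`. -/
structure WeightData {N : Type*} [AddCommGroup N] [Module R N]
    (gr : ℤ → Submodule R N) (F : ℕ → Submodule R N)
    (br : N → N → N) (D : N → N) (δ : ℕ) where
  p : ℕ → N →ₗ[R] N
  p_zero : p 0 = 0
  p_proj : ∀ k j x, p k (p j x) = if k = j then p k x else 0
  mem_F_iff : ∀ (n : ℕ) (x : N), x ∈ F n ↔ ∀ k < n, p k x = 0
  p_gr : ∀ (k : ℕ) (i : ℤ) (x : N), x ∈ gr i → p k x ∈ gr i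
  br_wt : ∀ (k l j : ℕ) (x y : N), j ≠ k + l → p j (br (p k x) (p l y)) = 0
  d_wt : ∀ (k j : ℕ) (x : N), j ≠ k → j ≠ k + δ → p j (D (p k x)) = 0

/-- A complete differential graded Lie algebra over `R` (Definition 1.1): a ℤ-graded
`R`-module with a degree-`0` graded Lie bracket, a degree `-1` differential, and a
complete descending filtration `g = F^1 ⊇ F^2 ⊇ ⋯` compatible with the bracket. -/
structure CompleteDGLA (R : Type*) [CommRing R] (L : Type*) [AddCommGroup L]
    [Module R L] where
  bracket : L →ₗ[R] L →ₗ[R] L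
  gr : ℤ → Submodule R L
  F : ℕ → Submodule R L
  d : L →ₗ[R] L
  F_one : F 1 = ⊤
  F_antitone : ∀ n, F (n + 1) ≤ F n
  separated : ∀ x : L, (∀ n, x ∈ F n) → x = 0
  complete : ∀ x : ℕ → L, (∀ n, x (n + 1) - x n ∈ F (n + 1)) →
    ∃ y : L, ∀ n, y - x n ∈ F (n + 1)
  bracket_gr : ∀ (i j : ℤ) (x y : L), x ∈ gr i → y ∈ gr j → bracket x y ∈ gr (i + j)
  bracket_F : ∀ (m n : ℕ) (x y : L), x ∈ F m → y ∈ F n → bracket x y ∈ F (m + n)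
  antisymm : ∀ (i j : ℤ) (x y : L), x ∈ gr i → y ∈ gr j →
    bracket x y = -(((Int.negOnePow (i * j) : ℤˣ) : ℤ) • bracket y x)
  jacobi : ∀ (i j : ℤ) (x y z : L), x ∈ gr i → y ∈ gr j →
    bracket x (bracket y z) =
      bracket (bracket x y) z + ((Int.negOnePow (i * j) : ℤˣ) : ℤ) • bracket y (bracket x z)
  d_gr : ∀ (i : ℤ) (x : L), x ∈ gr i → d x ∈ gr (i - 1)
  d_F : ∀ (n : ℕ) (x : L), x ∈ F n → d x ∈ F n
  d_sq : ∀ x : L, d (d x) = 0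
  leibniz : ∀ (i : ℤ) (x y : L), x ∈ gr i →
    d (bracket x y) = bracket (d x) y + ((Int.negOnePow i : ℤˣ) : ℤ) • bracket x (d y)

namespace CompleteDGLA

variable {R : Type*} [CommRing R] {L : Type*} [AddCommGroup L] [Module R L]
variable (G : CompleteDGLA R L)

/-- The adjoint action `ad_λ = [λ, -]`. -/
def ad : L → L → L := fun lam y => G.bracket lam y

/-- The Maurer--Cartan equation `D φ + ½ [φ, φ] = 0` for `φ` of degree `-1`,
with respect to a (possibly twisted) differential `D`. -/
def IsMCWith [Algebra ℚ R] (D : L → L) (φ : L) : Prop :=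
  φ ∈ G.gr (-1) ∧ D φ + algebraMap ℚ R (1 / 2 : ℚ) • G.bracket φ φ = 0

/-- Maurer--Cartan elements of the complete dg Lie algebra `G`. -/
def IsMC [Algebra ℚ R] (φ : L) : Prop := G.IsMCWith (fun x => G.d x) φ

/-- The differential `d^ψ = d + [ψ, -]` of the twisted dg Lie algebra `g^ψ`. -/
def dTwist (ψ : L) : L → L := fun x => G.d x + G.bracket ψ x

/-- The gauge action with respect to the (possibly twisted) differential `D`. -/
def gaugeWith [Algebra ℚ R] (D : L → L) (lam φ : L) : L :=
  gaugeSeries G.F G.ad D lam φ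

/-- The gauge action `λ · φ` of `λ ∈ g_0` on Maurer--Cartan elements. -/
def gauge [Algebra ℚ R] (lam φ : L) : L := G.gaugeWith (fun x => G.d x) lam φ

/-- Gauge equivalence of Maurer--Cartan elements (Definition 1.4). -/
def GaugeEquiv [Algebra ℚ R] (φ ψ : L) : Prop :=
  ∃ lam ∈ G.gr 0, G.gauge lam φ = ψ

/-- Vanishing of the obstruction class `θ_k ∈ H_{-1}(g / F^{k+1} g)` of `x`,
with respect to the (possibly twisted) differential `D`. -/
def ObstructionZero (D : L → L) (k : ℕ) (x : L) : Prop :=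
  ObstructionZeroG G.F (G.gr 0) D k x

/-- `φ` admits a gauge triviality sequence of length `n ∈ [1, ∞]` in `G`, for the
(possibly twisted) differential `D` (Definition 1.10). -/
def HasGTSeq [Algebra ℚ R] (D : L → L) (φ : L) (n : ℕ∞) : Prop :=
  HasGTSeqG G.F (G.gr 0) G.ad D φ n

/-- The gauge equivalence degree of `φ` and `ψ` (Definition 1.12) is `n`:
`φ - ψ` admits a gauge triviality sequence of length `n` in the twisted dg Lie
algebra `g^ψ`. -/
def GaugeDegree [Algebra ℚ R] (φ ψ : L) (n : ℕ∞) : Prop :=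
  G.HasGTSeq (G.dTwist ψ) (φ - ψ) n

end CompleteDGLA

end PaperGauge

/-!
The gauge series of `υ` acting on `φ` starts with `φ - d υ`, and its `k`-th term lies in
`F^{m+k}` as soon as `φ` and `d υ` lie in `F^m`. Hence `υ · φ ≡ φ - d υ` modulo `F^{m+1}`.
Taking `m = n` gives one direction; for the other, an induction on `m ≤ n` shows that
`υ · φ ∈ F^{n+1}` forces `d υ ∈ F^m` at every stage, and then `m = n` applies again.
-/

namespace PaperGauge

theorem limOfF_sub_mem {R N : Type*} [CommRing R] [AddCommGroup N] [Module R N]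
    (F : ℕ → Submodule R N) (x : ℕ → N) (hx : ∃ y : N, ∀ n, y - x n ∈ F (n + 1)) (n : ℕ) :
    limOfF F x - x n ∈ F (n + 1) := by
  rw [limOfF, dif_pos hx]
  exact hx.choose_spec n

namespace CompleteDGLA

variable {R L : Type*} [CommRing R] [AddCommGroup L] [Module R L] (G : CompleteDGLA R L)

theorem antitone_F : Antitone G.F := antitone_nat_of_succ_le G.F_antitone

theorem mem_F_of_le_one {k : ℕ} (hk : k ≤ 1) (x : L) : x ∈ G.F k :=
  G.antitone_F hk (G.F_one ▸ Submodule.mem_top)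

theorem ad_iterate_mem_F {m : ℕ} (υ : L) {x : L} (hx : x ∈ G.F m) (k : ℕ) :
    (G.ad υ)^[k] x ∈ G.F (m + k) := by
  induction k with
  | zero => simpa using hx
  | succ k ih =>
    rw [Function.iterate_succ_apply', show m + (k + 1) = 1 + (m + k) by omega]
    exact G.bracket_F 1 (m + k) υ _ (G.mem_F_of_le_one le_rfl υ) ih

theorem limOfF_sum_sub_sum_mem_F (t : ℕ → L) (ht : ∀ k, t k ∈ G.F (k + 1)) (M : ℕ) :
    limOfF G.F (fun M => ∑ k ∈ Finset.range (M + 1), t k) -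
      ∑ k ∈ Finset.range (M + 1), t k ∈ G.F (M + 1) := by
  refine limOfF_sub_mem _ _ (G.complete _ fun n => ?_) M
  rw [Finset.sum_range_succ _ (n + 1), add_sub_cancel_left]
  exact G.F_antitone _ (ht (n + 1))

theorem limOfF_sum_sub_head_mem_F (t : ℕ → L) (ht : ∀ k, t k ∈ G.F (k + 1)) {m : ℕ}
    (htail : ∀ k, t (k + 1) ∈ G.F (m + 1)) :
    limOfF G.F (fun M => ∑ k ∈ Finset.range (M + 1), t k) - t 0 ∈ G.F (m + 1) := by
  have hsum : ∑ k ∈ Finset.range (m + 1), t k - t 0 ∈ G.F (m + 1) := by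
    rw [Finset.sum_range_succ', add_sub_cancel_right]
    exact Submodule.sum_mem _ fun k _ => htail k
  simpa using add_mem (G.limOfF_sum_sub_sum_mem_F t ht m) hsum

variable [Algebra ℚ R]

def gaugeTerm (D : L → L) (lam φ : L) (k : ℕ) : L :=
  algebraMap ℚ R ((Nat.factorial k : ℚ))⁻¹ • (G.ad lam)^[k] φ -
    algebraMap ℚ R ((Nat.factorial (k + 1) : ℚ))⁻¹ • (G.ad lam)^[k] (D lam)

theorem gaugeWith_eq_limOfF (D : L → L) (lam φ : L) :
    G.gaugeWith D lam φ =
      limOfF G.F (fun M => ∑ k ∈ Finset.range (M + 1), G.gaugeTerm D lam φ k) := by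
  simp only [gaugeWith, gaugeSeries, gaugeTerm, Finset.sum_sub_distrib]

theorem gaugeTerm_zero (D : L → L) (lam φ : L) : G.gaugeTerm D lam φ 0 = φ - D lam := by
  simp [gaugeTerm]

theorem gaugeTerm_mem_F {D : L → L} {lam φ : L} {m : ℕ} (hφ : φ ∈ G.F m)
    (hD : D lam ∈ G.F m) (k : ℕ) : G.gaugeTerm D lam φ k ∈ G.F (m + k) :=
  sub_mem (Submodule.smul_mem _ _ (G.ad_iterate_mem_F lam hφ k))
    (Submodule.smul_mem _ _ (G.ad_iterate_mem_F lam hD k))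

theorem gaugeWith_sub_mem_F {D : L → L} {lam φ : L} {m : ℕ} (hφ : φ ∈ G.F m)
    (hD : D lam ∈ G.F m) : G.gaugeWith D lam φ - (φ - D lam) ∈ G.F (m + 1) := by
  rw [gaugeWith_eq_limOfF, ← G.gaugeTerm_zero D lam φ]
  refine G.limOfF_sum_sub_head_mem_F _ (fun k => ?_) (fun k => ?_)
  · simpa [add_comm] using
      G.gaugeTerm_mem_F (G.mem_F_of_le_one le_rfl φ) (G.mem_F_of_le_one le_rfl (D lam)) k
  · exact G.antitone_F (by omega) (G.gaugeTerm_mem_F hφ hD (k + 1))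

theorem gauge_sub_mem_F {υ φ : L} {m : ℕ} (hφ : φ ∈ G.F m) (hd : G.d υ ∈ G.F m) :
    G.gauge υ φ - (φ - G.d υ) ∈ G.F (m + 1) :=
  G.gaugeWith_sub_mem_F (D := fun x => G.d x) hφ hd

theorem d_mem_F_of_gauge_mem_F {n : ℕ} {υ φ : L} (hφ : φ ∈ G.F n)
    (hυφ : G.gauge υ φ ∈ G.F (n + 1)) : ∀ m ≤ n, G.d υ ∈ G.F m := by
  intro m hm
  induction m with
  | zero => exact G.mem_F_of_le_one zero_le_one _
  | succ m ih =>
    have hdυ := ih (by omega)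
    have hgauge : G.gauge υ φ - (φ - G.d υ) ∈ G.F (m + 1) :=
      G.gauge_sub_mem_F (G.antitone_F (by omega) hφ) hdυ
    have hφ' : φ - G.gauge υ φ ∈ G.F (m + 1) :=
      sub_mem (G.antitone_F hm hφ) (G.antitone_F (by omega) hυφ)
    simpa using add_mem hφ' hgauge

end CompleteDGLA

theorem statement1_general {R L : Type*} [CommRing R] [Algebra ℚ R] [AddCommGroup L]
    [Module R L] (G : CompleteDGLA R L) (n : ℕ)
    (φ : L) (hφF : φ ∈ G.F n) :
    G.ObstructionZero (fun x => G.d x) n φ ↔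
      ∃ υ ∈ G.gr 0, G.gauge υ φ ∈ G.F (n + 1) := by
  constructor
  · rintro ⟨υ, hυ, hφυ⟩
    have hdυ : G.d υ ∈ G.F n := by
      simpa using sub_mem hφF (G.antitone_F n.le_succ hφυ)
    exact ⟨υ, hυ, by simpa using add_mem (G.gauge_sub_mem_F hφF hdυ) hφυ⟩
  · rintro ⟨υ, hυ, hυφ⟩
    have hdυ := G.d_mem_F_of_gauge_mem_F hφF hυφ n le_rfl
    exact ⟨υ, hυ, by simpa using sub_mem hυφ (G.gauge_sub_mem_F hφF hdυ)⟩

/-- Proposition 1.8 of the paper. Let `h` be a complete dg Lie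
algebra over a `ℚ`-algebra, `n ≥ 1`, and let `φ ∈ MC(h)` with `φ ∈ F^n h`. The
obstruction class `θ_n = [π_{n+1}(φ)] ∈ H_{-1}(h / F^{n+1} h)` vanishes if and
only if there exists `υ ∈ h_0` with `υ · φ ∈ F^{n+1} h`. -/
theorem statement1 {R L : Type*} [CommRing R] [Algebra ℚ R] [AddCommGroup L]
    [Module R L] (G : CompleteDGLA R L) (n : ℕ) (hn : 1 ≤ n)
    (φ : L) (hφ : G.IsMC φ) (hφF : φ ∈ G.F n) :
    G.ObstructionZero (fun x => G.d x) n φ ↔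
      ∃ υ ∈ G.gr 0, G.gauge υ φ ∈ G.F (n + 1) :=
  statement1_general G n φ hφF

end PaperGauge
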